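/- For every total computable predicate T : ℕ → ℕ → ℕ → Bool there is a uniformly computable family of equivalence relations (R_p)_{p∈ℕ} on ℕ such that every R_p has finite equivalence classes of arbitrarily large size, and for every p: R_p has no infinite equivalence classes if and only if for every x the set {r ∈ ℕ : T x p r = true} is finite. -/

import Mathlib

/-- The equivalence class of `a` under the relation `E`. -/
def classOf (E : ℕ → ℕ → Prop) (a : ℕ) : Set ℕ := {x | E x a}

/-- `f` is an embedding of the equivalence structure `(ℕ, E)` into `(ℕ, E')`. -/
def IsEmb (E E' : ℕ → ℕ → Prop) (f : ℕ → ℕ) : Prop :=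
  Function.Injective f ∧ ∀ x y, E x y ↔ E' (f x) (f y)

/-- Bi-embeddability of equivalence structures on ℕ. -/
def BiEmb (E E' : ℕ → ℕ → Prop) : Prop :=
  (∃ f, IsEmb E E' f) ∧ (∃ g, IsEmb E' E g)

/-- `E` is a computable (decidable by a total computable function) binary relation. -/
def CompRel' (E : ℕ → ℕ → Prop) : Prop :=
  ∃ f : ℕ → ℕ → Bool, Computable₂ f ∧ ∀ x y, E x y ↔ f x y = true

/-- The collection of infinite equivalence classes of `E`. -/
def InfClasses (E : ℕ → ℕ → Prop) : Set (Set ℕ) :=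
  {C | (∃ a, C = classOf E a) ∧ C.Infinite}

/-- The collection of equivalence classes of `E` of size exactly `m`. -/
def sizeClasses (E : ℕ → ℕ → Prop) (m : ℕ) : Set (Set ℕ) :=
  {C | (∃ a, C = classOf E a) ∧ C.Finite ∧ C.ncard = m}

/-- `E` has bounded character: some `k` bounds the size of every finite class. -/
def BoundedCharacter (E : ℕ → ℕ → Prop) : Prop :=
  ∃ k, ∀ a, (classOf E a).Finite → (classOf E a).ncard ≤ k

/-- `E` has unbounded character: finite classes of arbitrarily large size. -/
def UnboundedCharacter (E : ℕ → ℕ → Prop) : Prop :=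
  ∀ k, ∃ a, (classOf E a).Finite ∧ k < (classOf E a).ncard

/-- `E` is computably bi-embeddably categorical. -/
def CompBiembCat (E : ℕ → ℕ → Prop) : Prop :=
  ∀ E' : ℕ → ℕ → Prop, Equivalence E' → CompRel' E' → BiEmb E E' →
    (∃ f, Computable f ∧ IsEmb E E' f) ∧ (∃ g, Computable g ∧ IsEmb E' E g)

/-- `f` is an isomorphism of `(ℕ, E)` onto `(ℕ, E')`. -/
def IsIso (E E' : ℕ → ℕ → Prop) (f : ℕ → ℕ) : Prop :=
  Function.Bijective f ∧ ∀ x y, E x y ↔ E' (f x) (f y)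

/-- `E` is computably categorical. -/
def CompCat (E : ℕ → ℕ → Prop) : Prop :=
  ∀ E' : ℕ → ℕ → Prop, Equivalence E' → CompRel' E' → (∃ f, IsIso E' E f) →
    ∃ f, Computable f ∧ IsIso E' E f

/-- `W e` is the domain of the `e`-th partial computable function. -/
def W (e : ℕ) : Set ℕ :=
  {x | ((Denumerable.ofNat Nat.Partrec.Code e).eval x).Dom}
namespace Stmt17Aux

def ux (a : ℕ) : ℕ := (a / 2).unpair.1
def ur (a : ℕ) : ℕ := (a / 2).unpair.2

def Rfun (T : ℕ → ℕ → ℕ → Bool) (p a b : ℕ) : Bool :=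
  decide (a = b) ||
  (decide (a % 2 = 0) && decide (b % 2 = 0) && decide (ux a = ux b) &&
    T (ux a) p (ur a) && T (ux b) p (ur b)) ||
  (decide (a % 2 = 1) && decide (b % 2 = 1) && decide (ux a = ux b) &&
    decide (ur a ≤ ux a) && decide (ur b ≤ ux b))

theorem Rfun_iff (T : ℕ → ℕ → ℕ → Bool) (p a b : ℕ) :
    Rfun T p a b = true ↔
      a = b ∨
      (a % 2 = 0 ∧ b % 2 = 0 ∧ ux a = ux b ∧
        T (ux a) p (ur a) = true ∧ T (ux b) p (ur b) = true) ∨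
      (a % 2 = 1 ∧ b % 2 = 1 ∧ ux a = ux b ∧ ur a ≤ ux a ∧ ur b ≤ ux b) := by
  simp [Rfun, Bool.or_eq_true, Bool.and_eq_true, decide_eq_true_eq, and_assoc, or_assoc]

theorem ux_even (x r : ℕ) : ux (2 * Nat.pair x r) = x := by
  simp [ux, Nat.mul_div_cancel_left _ (by norm_num : (0:ℕ) < 2)]
theorem ur_even (x r : ℕ) : ur (2 * Nat.pair x r) = r := by
  simp [ur, Nat.mul_div_cancel_left _ (by norm_num : (0:ℕ) < 2)]
theorem ux_odd (x r : ℕ) : ux (2 * Nat.pair x r + 1) = x := by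
  have : (2 * Nat.pair x r + 1) / 2 = Nat.pair x r := by omega
  simp [ux, this]
theorem ur_odd (x r : ℕ) : ur (2 * Nat.pair x r + 1) = r := by
  have : (2 * Nat.pair x r + 1) / 2 = Nat.pair x r := by omega
  simp [ur, this]

theorem even_eq (a : ℕ) (h : a % 2 = 0) : a = 2 * Nat.pair (ux a) (ur a) := by
  have h2 : Nat.pair (ux a) (ur a) = a / 2 := Nat.pair_unpair _
  omega
theorem odd_eq (a : ℕ) (h : a % 2 = 1) : a = 2 * Nat.pair (ux a) (ur a) + 1 := by
  have h2 : Nat.pair (ux a) (ur a) = a / 2 := Nat.pair_unpair _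
  omega

variable (T : ℕ → ℕ → ℕ → Bool) (p : ℕ)

theorem equiv : Equivalence (fun x y => Rfun T p x y = true) := by
  constructor
  · intro a; rw [Rfun_iff]; exact Or.inl rfl
  · intro a b h; rw [Rfun_iff] at h ⊢
    rcases h with rfl | ⟨h1, h2, h3, h4, h5⟩ | ⟨h1, h2, h3, h4, h5⟩
    · exact Or.inl rfl
    · exact Or.inr (Or.inl ⟨h2, h1, h3.symm, h5, h4⟩)
    · exact Or.inr (Or.inr ⟨h2, h1, h3.symm, h5, h4⟩)
  · intro a b c hab hbc; rw [Rfun_iff] at hab hbc ⊢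
    rcases hab with rfl | ⟨h1, h2, h3, h4, h5⟩ | ⟨h1, h2, h3, h4, h5⟩
    · exact hbc
    · rcases hbc with rfl | ⟨g1, g2, g3, g4, g5⟩ | ⟨g1, g2, g3, g4, g5⟩
      · exact Or.inr (Or.inl ⟨h1, h2, h3, h4, h5⟩)
      · exact Or.inr (Or.inl ⟨h1, g2, h3.trans g3, h4, g5⟩)
      · omega
    · rcases hbc with rfl | ⟨g1, g2, g3, g4, g5⟩ | ⟨g1, g2, g3, g4, g5⟩
      · exact Or.inr (Or.inr ⟨h1, h2, h3, h4, h5⟩)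
      · omega
      · exact Or.inr (Or.inr ⟨h1, g2, h3.trans g3, h4, g5⟩)

theorem class_odd (k i : ℕ) (hik : i ≤ k) :
    classOf (fun x y => Rfun T p x y = true) (2 * Nat.pair k i + 1) =
      (fun j => 2 * Nat.pair k j + 1) '' Set.Iic k := by
  ext z
  simp only [classOf, Set.mem_setOf_eq, Rfun_iff, ux_odd, ur_odd, Set.mem_image, Set.mem_Iic]
  constructor
  · rintro (rfl | ⟨h1, h2, h3, h4, h5⟩ | ⟨h1, h2, h3, h4, h5⟩)
    · exact ⟨i, hik, rfl⟩
    · omega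
    · exact ⟨ur z, h3 ▸ h4, by rw [← h3]; exact (odd_eq z h1).symm⟩
  · rintro ⟨j, hj, rfl⟩
    exact Or.inr (Or.inr ⟨by omega, by omega, by rw [ux_odd], by rw [ux_odd, ur_odd]; exact hj, hik⟩)

theorem class_odd_big (k i : ℕ) (hik : k < i) :
    classOf (fun x y => Rfun T p x y = true) (2 * Nat.pair k i + 1) =
      {2 * Nat.pair k i + 1} := by
  ext z
  simp only [classOf, Set.mem_setOf_eq, Rfun_iff, ux_odd, ur_odd, Set.mem_singleton_iff]
  constructor
  · rintro (rfl | ⟨h1, h2, h3, h4, h5⟩ | ⟨h1, h2, h3, h4, h5⟩)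
    · rfl
    · omega
    · omega
  · rintro rfl; exact Or.inl rfl

theorem class_even_pos (x r : ℕ) (hr : T x p r = true) :
    classOf (fun x y => Rfun T p x y = true) (2 * Nat.pair x r) =
      (fun r' => 2 * Nat.pair x r') '' {r' | T x p r' = true} := by
  ext z
  simp only [classOf, Set.mem_setOf_eq, Rfun_iff, ux_even, ur_even, Set.mem_image]
  constructor
  · rintro (rfl | ⟨h1, h2, h3, h4, h5⟩ | ⟨h1, h2, h3, h4, h5⟩)
    · exact ⟨r, hr, rfl⟩
    · exact ⟨ur z, h3 ▸ h4, by rw [← h3]; exact (even_eq z h1).symm⟩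
    · omega
  · rintro ⟨r', hr', rfl⟩
    exact Or.inr (Or.inl ⟨by omega, by omega, by rw [ux_even],
      by rw [ux_even, ur_even]; exact hr', hr⟩)

theorem class_even_neg (x r : ℕ) (hr : T x p r = false) :
    classOf (fun x y => Rfun T p x y = true) (2 * Nat.pair x r) =
      {2 * Nat.pair x r} := by
  ext z
  simp only [classOf, Set.mem_setOf_eq, Rfun_iff, ux_even, ur_even, Set.mem_singleton_iff]
  constructor
  · rintro (rfl | ⟨h1, h2, h3, h4, h5⟩ | ⟨h1, h2, h3, h4, h5⟩)
    · rfl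
    · rw [hr] at h5; exact absurd h5 (by simp)
    · omega
  · rintro rfl; exact Or.inl rfl

theorem inj_odd (k : ℕ) : Function.Injective (fun j => 2 * Nat.pair k j + 1) := by
  intro a b h
  simp only at h
  have : Nat.pair k a = Nat.pair k b := by omega
  have := Nat.pair_eq_pair.mp this
  exact this.2

theorem inj_even (x : ℕ) : Function.Injective (fun r => 2 * Nat.pair x r) := by
  intro a b h
  simp only at h
  have : Nat.pair x a = Nat.pair x b := by omega
  have := Nat.pair_eq_pair.mp this
  exact this.2

set_option maxHeartbeats 4000000 in
theorem Rfun_computable (T : ℕ → ℕ → ℕ → Bool)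
    (hT : Computable (fun q : ℕ × ℕ × ℕ => T q.1 q.2.1 q.2.2)) :
    Computable (fun q : ℕ × ℕ × ℕ => Rfun T q.1 q.2.1 q.2.2) := by
  have pP : Primrec fun q : ℕ × ℕ × ℕ => q.1 := Primrec.fst
  have pa : Primrec fun q : ℕ × ℕ × ℕ => q.2.1 := Primrec.fst.comp Primrec.snd
  have pb : Primrec fun q : ℕ × ℕ × ℕ => q.2.2 := Primrec.snd.comp Primrec.snd
  have hux : ∀ {f : ℕ × ℕ × ℕ → ℕ}, Primrec f → Primrec fun q => ux (f q) := fun hf =>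
    Primrec.fst.comp (Primrec.unpair.comp (Primrec.nat_div.comp hf (Primrec.const 2)))
  have hur : ∀ {f : ℕ × ℕ × ℕ → ℕ}, Primrec f → Primrec fun q => ur (f q) := fun hf =>
    Primrec.snd.comp (Primrec.unpair.comp (Primrec.nat_div.comp hf (Primrec.const 2)))
  have hmod : ∀ {f : ℕ × ℕ × ℕ → ℕ}, Primrec f → ∀ c : ℕ,
      Primrec fun q => decide (f q % 2 = c) := fun hf c =>
    (Primrec.eq.comp (Primrec.nat_mod.comp hf (Primrec.const 2)) (Primrec.const c)).decide
  have band : ∀ {f g : ℕ × ℕ × ℕ → Bool}, Computable f → Computable g →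
      Computable fun q => f q && g q := fun hf hg =>
    (Primrec.dom_bool₂ (· && ·)).to_comp.comp hf hg
  have bor : ∀ {f g : ℕ × ℕ × ℕ → Bool}, Computable f → Computable g →
      Computable fun q => f q || g q := fun hf hg =>
    (Primrec.dom_bool₂ (· || ·)).to_comp.comp hf hg
  have hTa : Computable fun q : ℕ × ℕ × ℕ => T (ux q.2.1) q.1 (ur q.2.1) :=
    hT.comp (((hux pa).to_comp).pair (pP.to_comp.pair (hur pa).to_comp))
  have hTb : Computable fun q : ℕ × ℕ × ℕ => T (ux q.2.2) q.1 (ur q.2.2) :=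
    hT.comp (((hux pb).to_comp).pair (pP.to_comp.pair (hur pb).to_comp))
  have heqab : Primrec fun q : ℕ × ℕ × ℕ => decide (q.2.1 = q.2.2) := (Primrec.eq.comp pa pb).decide
  have hequx : Primrec fun q : ℕ × ℕ × ℕ => decide (ux q.2.1 = ux q.2.2) :=
    (Primrec.eq.comp (hux pa) (hux pb)).decide
  have hlea : Primrec fun q : ℕ × ℕ × ℕ => decide (ur q.2.1 ≤ ux q.2.1) :=
    (Primrec.nat_le.comp (hur pa) (hux pa)).decide
  have hleb : Primrec fun q : ℕ × ℕ × ℕ => decide (ur q.2.2 ≤ ux q.2.2) :=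
    (Primrec.nat_le.comp (hur pb) (hux pb)).decide
  exact bor (bor heqab.to_comp
      (band (band (band (band (hmod pa 0).to_comp (hmod pb 0).to_comp) hequx.to_comp) hTa) hTb))
    (band (band (band (band (hmod pa 1).to_comp (hmod pb 1).to_comp) hequx.to_comp)
      hlea.to_comp) hleb.to_comp)

end Stmt17Aux

open Stmt17Aux

/-- Π⁰₃-hardness construction: for every total computable predicate `T` there is a
uniformly computable family `(R_p)` of equivalence relations with finite classes of
arbitrarily large size, having no infinite class iff `{r | T x p r}` is finite for
every `x`. -/
theorem stmt17 (T : ℕ → ℕ → ℕ → Bool)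
    (hT : Computable (fun q : ℕ × ℕ × ℕ => T q.1 q.2.1 q.2.2)) :
    ∃ R : ℕ → ℕ → ℕ → Bool,
      Computable (fun q : ℕ × ℕ × ℕ => R q.1 q.2.1 q.2.2) ∧
      (∀ p, Equivalence (fun x y => R p x y = true)) ∧
      (∀ p, UnboundedCharacter (fun x y => R p x y = true)) ∧
      (∀ p, (∀ a, (classOf (fun x y => R p x y = true) a).Finite) ↔
        ∀ x, {r : ℕ | T x p r = true}.Finite) := by
  refine ⟨Rfun T, ?_, fun p => equiv T p, ?_, ?_⟩
  · exact Rfun_computable T hT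
  · -- unbounded character
    intro p k
    refine ⟨2 * Nat.pair k 0 + 1, ?_⟩
    rw [class_odd T p k 0 (Nat.zero_le k)]
    constructor
    · exact (Set.finite_Iic k).image _
    · rw [Set.ncard_image_of_injective _ (inj_odd k)]
      have : (Set.Iic k) = ↑(Finset.Iic k) := by simp
      rw [this, Set.ncard_coe_finset, Nat.card_Iic]
      omega
  · -- the iff
    intro p
    constructor
    · intro hfin x
      by_cases h : ∃ r₀, T x p r₀ = true
      · obtain ⟨r₀, hr₀⟩ := h
        have hc := hfin (2 * Nat.pair x r₀)
        rw [class_even_pos T p x r₀ hr₀] at hc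
        exact hc.of_finite_image ((inj_even x).injOn)
      · push_neg at h
        have : {r : ℕ | T x p r = true} = ∅ := by
          ext r; simp only [Set.mem_setOf_eq, Set.mem_empty_iff_false, iff_false]
          exact fun hr => h r hr
        rw [this]; exact Set.finite_empty
    · intro hfin a
      rcases Nat.mod_two_eq_zero_or_one a with h | h
      · rcases Bool.eq_false_or_eq_true (T (ux a) p (ur a)) with hTa | hTa
        · rw [show a = 2 * Nat.pair (ux a) (ur a) from even_eq a h,
            class_even_pos T p _ _ hTa]
          exact (hfin (ux a)).image _
        · rw [show a = 2 * Nat.pair (ux a) (ur a) from even_eq a h,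
            class_even_neg T p _ _ hTa]
          exact Set.finite_singleton _
      · rcases le_or_gt (ur a) (ux a) with hle | hlt
        · rw [show a = 2 * Nat.pair (ux a) (ur a) + 1 from odd_eq a h,
            class_odd T p _ _ hle]
          exact (Set.finite_Iic _).image _
        · rw [show a = 2 * Nat.pair (ux a) (ur a) + 1 from odd_eq a h,
            class_odd_big T p _ _ hlt]
          exact Set.finite_singleton _
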